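/- arXiv:1307.0079 — 5 statements merged into one kernel-verified Lean document; each statement's English description precedes it below -/
import Mathlib

section
/- Let G be a connected graph of order n containing two distinct bridges e and f. Then for each integer k with 2 ≤ k ≤ n, every k-rainbow coloring of G assigns distinct colors to e and f. -/
open SimpleGraph

universe u

/-- `T` is a rainbow `S`-tree: a tree (as a subgraph of `G`) containing all vertices of `S`
whose edges receive pairwise distinct colors under `c`. -/
def SimpleGraph.IsRainbowSTree {V : Type u} {α : Type*} (G : SimpleGraph V)
    (c : Sym2 V → α) (S : Set V) (T : G.Subgraph) : Prop :=
  T.coe.IsTree ∧ S ⊆ T.verts ∧ Set.InjOn c T.edgeSet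

/-- `c` is a `k`-rainbow coloring of `G`: every `k`-subset of vertices has a rainbow tree. -/
def SimpleGraph.IsRainbowColoring {V : Type u} {α : Type*} [DecidableEq V]
    (G : SimpleGraph V) (k : ℕ) (c : Sym2 V → α) : Prop :=
  ∀ S : Finset V, S.card = k → ∃ T : G.Subgraph, G.IsRainbowSTree c ↑S T

/-- The `k`-rainbow index: minimum number of colors in a `k`-rainbow coloring. -/
noncomputable def SimpleGraph.rxk {V : Type u} [DecidableEq V]
    (G : SimpleGraph V) (k : ℕ) : ℕ :=
  sInf {q | ∃ c : Sym2 V → Fin q, G.IsRainbowColoring k c}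

/-- Steiner distance of a vertex set `S` : minimum size of a tree of `G` connecting `S`. -/
noncomputable def SimpleGraph.steinerDist {V : Type u} (G : SimpleGraph V) (S : Set V) : ℕ :=
  sInf {m | ∃ T : G.Subgraph, T.coe.IsTree ∧ S ⊆ T.verts ∧ T.edgeSet.ncard = m}

/-- The `k`-Steiner diameter: maximum Steiner distance over all `k`-subsets. -/
noncomputable def SimpleGraph.sdiam {V : Type u} [DecidableEq V]
    (G : SimpleGraph V) (k : ℕ) : ℕ :=
  sSup {d | ∃ S : Finset V, S.card = k ∧ G.steinerDist ↑S = d}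

/-! A bridge `e` splits `G` into the two sides of `G.deleteEdges {e}`, and two such partitions
(for the bridges `e` and `f`) always admit a pair of vertices `u`, `w` lying on different sides of
both. Any tree through `u` and `w` then contains both `e` and `f`; since `k ≥ 2`, the pair extends
to a `k`-set, whose rainbow tree forces `c e ≠ c f`. -/

theorem Equivalence.exists_not_and_not {β : Sort*} {r s : β → β → Prop}
    (hr : Equivalence r) (hs : Equivalence s) {a b x y : β} (hab : ¬ r a b) (hxy : ¬ s x y) :
    ∃ u w, ¬ r u w ∧ ¬ s u w := by
  by_cases hrxy : r x y
  · obtain ⟨u, hux⟩ : ∃ u, ¬ r u x := by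
      by_cases hax : r a x
      · exact ⟨b, fun hbx => hab (hr.trans hax (hr.symm hbx))⟩
      · exact ⟨a, hax⟩
    have huy : ¬ r u y := fun huy => hux (hr.trans huy (hr.symm hrxy))
    by_cases hsux : s u x
    · exact ⟨u, y, huy, fun hsuy => hxy (hs.trans (hs.symm hsux) hsuy)⟩
    · exact ⟨u, x, hux, hsux⟩
  · exact ⟨x, y, hrxy, hxy⟩

namespace SimpleGraph

variable {V : Type u} {G : SimpleGraph V}

theorem IsBridge.exists_not_reachable {e : Sym2 V} (he : G.IsBridge e) :
    ∃ a b, ¬ (G.deleteEdges {e}).Reachable a b := by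
  induction e using Sym2.ind with | _ a b => exact ⟨a, b, isBridge_iff.1 he⟩

theorem IsBridge.exists_not_reachable_and_not_reachable {e f : Sym2 V}
    (he : G.IsBridge e) (hf : G.IsBridge f) :
    ∃ u w, ¬ (G.deleteEdges {e}).Reachable u w ∧ ¬ (G.deleteEdges {f}).Reachable u w := by
  obtain ⟨a, b, hab⟩ := he.exists_not_reachable
  obtain ⟨x, y, hxy⟩ := hf.exists_not_reachable
  exact Equivalence.exists_not_and_not (reachable_is_equivalence _) (reachable_is_equivalence _)
    hab hxy

theorem Subgraph.Preconnected.mem_edgeSet_of_not_reachable_deleteEdges {T : G.Subgraph}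
    (hT : T.Preconnected) {e : Sym2 V} {u w : V} (hu : u ∈ T.verts) (hw : w ∈ T.verts)
    (huw : ¬ (G.deleteEdges {e}).Reachable u w) : e ∈ T.edgeSet := by
  obtain ⟨p, hpT⟩ := (Subgraph.preconnected_iff_forall_exists_walk_subgraph T).1 hT hu hw
  induction e using Sym2.ind with | _ a b => ?_
  by_contra heT
  exact huw <| reachable_deleteEdges_iff_exists_walk.2
    ⟨p, fun hep => heT (Subgraph.edgeSet_mono hpT (p.mem_edges_toSubgraph.2 hep))⟩

variable {α : Type*}

theorem IsRainbowSTree.apply_ne_of_not_reachable {c : Sym2 V → α} {S : Set V} {T : G.Subgraph}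
    (hT : G.IsRainbowSTree c S T) {u w : V} (hu : u ∈ S) (hw : w ∈ S) {e f : Sym2 V}
    (he : ¬ (G.deleteEdges {e}).Reachable u w) (hf : ¬ (G.deleteEdges {f}).Reachable u w)
    (hef : e ≠ f) : c e ≠ c f := by
  obtain ⟨htree, hST, hinj⟩ := hT
  have hconn : T.Preconnected := ⟨htree.connected.preconnected⟩
  have heT := hconn.mem_edgeSet_of_not_reachable_deleteEdges (hST hu) (hST hw) he
  have hfT := hconn.mem_edgeSet_of_not_reachable_deleteEdges (hST hu) (hST hw) hf
  exact fun hc => hef (hinj heT hfT hc)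

theorem IsRainbowColoring.exists_isRainbowSTree_pair [Fintype V] [DecidableEq V] {k : ℕ}
    {c : Sym2 V → α} (hc : G.IsRainbowColoring k c) (hk2 : 2 ≤ k) (hkV : k ≤ Fintype.card V)
    {u w : V} (huw : u ≠ w) :
    ∃ S : Set V, u ∈ S ∧ w ∈ S ∧ ∃ T, G.IsRainbowSTree c S T := by
  obtain ⟨S, hS, hScard⟩ :=
    Finset.exists_superset_card_eq (s := {u, w}) ((Finset.card_pair huw).trans_le hk2) hkV
  exact ⟨S, hS (by simp), hS (by simp), hc S hScard⟩

end SimpleGraph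

theorem stmt_2_general {V : Type u} [Fintype V] [DecidableEq V] {α : Type*} (G : SimpleGraph V)
    (n k : ℕ) (hn : Fintype.card V = n)
    (e f : Sym2 V) (he : G.IsBridge e) (hf : G.IsBridge f) (hef : e ≠ f)
    (hk2 : 2 ≤ k) (hkn : k ≤ n)
    (c : Sym2 V → α) (hc : G.IsRainbowColoring k c) :
    c e ≠ c f := by
  obtain ⟨u, w, hue, huf⟩ := he.exists_not_reachable_and_not_reachable hf
  have huw : u ≠ w := by
    rintro rfl
    exact hue .rfl
  obtain ⟨S, hu, hw, T, hT⟩ := hc.exists_isRainbowSTree_pair hk2 (hn ▸ hkn) huw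
  exact hT.apply_ne_of_not_reachable hu hw hue huf hef

theorem stmt_2 {V : Type u} [Fintype V] [DecidableEq V] {α : Type*} (G : SimpleGraph V)
    (n k : ℕ) (hconn : G.Connected) (hn : Fintype.card V = n)
    (e f : Sym2 V) (he : G.IsBridge e) (hf : G.IsBridge f) (hef : e ≠ f)
    (hk2 : 2 ≤ k) (hkn : k ≤ n)
    (c : Sym2 V → α) (hc : G.IsRainbowColoring k c) :
    c e ≠ c f :=
  stmt_2_general G n k hn e f he hf hef hk2 hkn c hc
end

section
/- For 3 ≤ n ≤ 5, the 3-rainbow index of the complete graph K_n equals 2. -/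
/-!
Color the edges of `K₅` by whether they belong to the pentagon or to the complementary
pentagram. Both are triangle-free, so among the three edges joining any three vertices two
have different colors, and these two edges form a rainbow path through the three vertices;
restricting to `Kₙ ⊆ K₅` gives the same for `n ≤ 5`. Conversely, a tree containing three
distinct vertices has at least two edges, so a rainbow coloring needs two colors.
-/

open SimpleGraph

universe u

namespace SimpleGraph

variable {V : Type u} {α : Type*}

theorem IsAcyclic.of_encard_edgeSet_le_two {G : SimpleGraph V} (h : G.edgeSet.encard ≤ 2) :
    G.IsAcyclic := by
  classical
  intro v c hc
  have hsub : (↑c.edges.toFinset : Set (Sym2 V)) ⊆ G.edgeSet := fun e he =>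
    c.edges_subset_edgeSet (List.mem_toFinset.mp he)
  have hcard := (Set.encard_le_encard hsub).trans h
  rw [Set.encard_coe_eq_coe_finsetCard, List.toFinset_card_of_nodup hc.edges_nodup,
    Walk.length_edges] at hcard
  have := hc.three_le_length
  exact absurd hcard (by norm_cast; omega)

theorem Subgraph.isAcyclic_coe_of_encard_edgeSet_le_two {G : SimpleGraph V} {H : G.Subgraph}
    (h : H.edgeSet.encard ≤ 2) : H.coe.IsAcyclic := by
  refine IsAcyclic.of_encard_edgeSet_le_two (le_trans ?_ h)
  rw [Subgraph.edgeSet_coe, ← (Sym2.map.injective Subtype.val_injective).encard_image]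
  exact Set.encard_le_encard (Set.image_preimage_subset _ _)

theorem Subgraph.Preconnected.edgeSet_nontrivial {G : SimpleGraph V} {T : G.Subgraph}
    (hT : T.Preconnected) {a b c : V} (hab : a ≠ b) (hac : a ≠ c) (hbc : b ≠ c)
    (ha : a ∈ T.verts) (hb : b ∈ T.verts) (hc : c ∈ T.verts) : T.edgeSet.Nontrivial := by
  have : Nontrivial T.verts := ⟨⟨a, ha⟩, ⟨b, hb⟩, by simpa using hab⟩
  have incident : ∀ v ∈ T.verts, ∃ e ∈ T.edgeSet, v ∈ e := fun v hv => by
    obtain ⟨w, hvw⟩ := hT.exists_adj_of_nontrivial ⟨v, hv⟩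
    exact ⟨s(v, w), hvw, Sym2.mem_mk_left v w⟩
  obtain ⟨ea, hea, hae⟩ := incident a ha
  obtain ⟨eb, heb, hbe⟩ := incident b hb
  obtain ⟨ec, hec, hce⟩ := incident c hc
  by_contra hsub
  rw [Set.not_nontrivial_iff] at hsub
  obtain rfl := hsub hea heb
  obtain rfl := hsub hea hec
  rw [(Sym2.mem_and_mem_iff hab).mp ⟨hae, hbe⟩, Sym2.mem_iff] at hce
  rcases hce with rfl | rfl
  exacts [hac rfl, hbc rfl]

theorem exists_isRainbowSTree_of_adj_of_adj {G : SimpleGraph V} {c : Sym2 V → α} {x y z : V}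
    (hxy : G.Adj x y) (hyz : G.Adj y z) (hc : c s(x, y) ≠ c s(y, z)) :
    ∃ T : G.Subgraph, G.IsRainbowSTree c {x, y, z} T := by
  let p : G.Walk x z := .cons hxy (.cons hyz .nil)
  have hedges : p.toSubgraph.edgeSet = {s(x, y), s(y, z)} := by
    ext e
    simp [p, or_comm]
  refine ⟨p.toSubgraph, ⟨p.toSubgraph_connected.coe, ?_⟩, ?_, ?_⟩
  · refine Subgraph.isAcyclic_coe_of_encard_edgeSet_le_two ?_
    rw [hedges]
    calc ({s(x, y), s(y, z)} : Set (Sym2 V)).encard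
        ≤ ({s(y, z)} : Set (Sym2 V)).encard + 1 := Set.encard_insert_le _ _
      _ = 2 := by rw [Set.encard_singleton]; rfl
  · intro v hv
    rw [Walk.mem_verts_toSubgraph]
    rcases hv with rfl | rfl | rfl <;> simp [p]
  · rw [hedges]
    rintro e (rfl | rfl) f (rfl | rfl) hef
    exacts [rfl, absurd hef hc, absurd hef.symm hc, rfl]

theorem IsRainbowColoring.nontrivial [Fintype V] [DecidableEq V] {G : SimpleGraph V}
    {c : Sym2 V → α} (hc : G.IsRainbowColoring 3 c) (hV : 3 ≤ Fintype.card V) :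
    Nontrivial α := by
  obtain ⟨S, -, hS⟩ := Finset.exists_subset_card_eq (s := Finset.univ) hV
  obtain ⟨T, hT, hST, hinj⟩ := hc S hS
  obtain ⟨a, b, d, hab, had, hbd, rfl⟩ := Finset.card_eq_three.mp hS
  have hE := Subgraph.Preconnected.edgeSet_nontrivial ⟨hT.connected.preconnected⟩ hab had hbd
    (hST (by simp)) (hST (by simp)) (hST (by simp))
  obtain ⟨x, -, y, -, hxy⟩ := hE.image_of_injOn hinj
  exact ⟨x, y, hxy⟩

def NoMonochromaticTriangle (c : Sym2 V → α) : Prop :=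
  ∀ ⦃x y z : V⦄, x ≠ y → y ≠ z → x ≠ z →
    c s(x, y) = c s(y, z) → c s(y, z) ≠ c s(x, z)

theorem NoMonochromaticTriangle.comp_map {W : Type*} {c : Sym2 W → α}
    (h : NoMonochromaticTriangle c) {f : V → W} (hf : Function.Injective f) :
    NoMonochromaticTriangle (c ∘ Sym2.map f) := fun _ _ _ hxy hyz hxz =>
  h (hf.ne hxy) (hf.ne hyz) (hf.ne hxz)

theorem isRainbowColoring_top_three [DecidableEq V] {c : Sym2 V → α}
    (h : NoMonochromaticTriangle c) : (⊤ : SimpleGraph V).IsRainbowColoring 3 c := by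
  intro S hS
  obtain ⟨a, b, d, hab, had, hbd, rfl⟩ := Finset.card_eq_three.mp hS
  rw [Finset.coe_insert, Finset.coe_pair]
  by_cases hc : c s(a, b) = c s(b, d)
  · rw [Set.pair_comm]
    refine exists_isRainbowSTree_of_adj_of_adj ((top_adj _ _).mpr had)
      ((top_adj _ _).mpr hbd.symm) ?_
    rw [Sym2.eq_swap (a := d)]
    exact (h hab hbd had hc).symm
  · exact exists_isRainbowSTree_of_adj_of_adj ((top_adj _ _).mpr hab) ((top_adj _ _).mpr hbd) hc

end SimpleGraph

/-- Subtraction in `Fin 5` is modular, so the edges colored `0` are those of the pentagon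
`0-1-2-3-4-0` and the edges colored `1` those of the pentagram. -/
def pentagonColoring : Sym2 (Fin 5) → Fin 2 :=
  Sym2.lift ⟨fun i j => if j - i = 1 ∨ i - j = 1 then 0 else 1,
    fun i j => by simp only [or_comm]⟩

theorem noMonochromaticTriangle_pentagonColoring : NoMonochromaticTriangle pentagonColoring := by
  unfold NoMonochromaticTriangle
  decide

theorem stmt_3 (n : ℕ) (h3 : 3 ≤ n) (h5 : n ≤ 5) :
    (⊤ : SimpleGraph (Fin n)).rxk 3 = 2 := by
  have hcol : (⊤ : SimpleGraph (Fin n)).IsRainbowColoring 3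
      (pentagonColoring ∘ Sym2.map (Fin.castLE h5)) :=
    isRainbowColoring_top_three
      (noMonochromaticTriangle_pentagonColoring.comp_map (Fin.castLE_injective h5))
  refine le_antisymm (Nat.sInf_le ⟨_, hcol⟩) (le_csInf ⟨2, _, hcol⟩ ?_)
  rintro q ⟨c, hc⟩
  exact Fin.nontrivial_iff_two_le.mp (hc.nontrivial (by rwa [Fintype.card_fin]))
end

section
/- If G is a connected graph of order n ≥ 6, then for each integer k with 3 ≤ k ≤ n, rx_k(G) ≥ 3. -/
open SimpleGraph

universe u

/-!
With at most two colours a rainbow tree has at most two edges, hence at most three vertices, so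
no `k`-set with `k ≥ 4` has one. For `k = 3`, a rainbow tree for a triple `{x, y, z}` consists of
two edges inside the triple with distinct colours. Fix a colour `a` and call a pair red when it is
an edge of colour `a`; since `R(3, 3) = 6`, some triple is red or non-red throughout, and then its
edges all have colour `a`, or all avoid `a` and so share the other colour.
-/

namespace SimpleGraph

variable {V : Type u} {α : Type*} {G : SimpleGraph V}

lemma Connected.exists_isSpanning_isTree (hG : G.Connected) :
    ∃ T : G.Subgraph, T.IsSpanning ∧ T.coe.IsTree := by
  obtain ⟨H, hle, hH⟩ := hG.exists_isTree_le
  have hspan := toSubgraph.isSpanning H hle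
  exact ⟨toSubgraph H hle, hspan, (Subgraph.spanningCoeEquivCoeOfSpanning _ hspan).isTree_iff.mp hH⟩

lemma isRainbowColoring_of_injective [DecidableEq V] (hG : G.Connected) {c : Sym2 V → α}
    (hc : c.Injective) (k : ℕ) : G.IsRainbowColoring k c := by
  obtain ⟨T, hspan, hT⟩ := hG.exists_isSpanning_isTree
  exact fun S _ ↦ ⟨T, hT, fun v _ ↦ hspan v, hc.injOn⟩

lemma Subgraph.ncard_verts_eq_ncard_edgeSet_add_one [Finite V] {T : G.Subgraph}
    (hT : T.coe.IsTree) : T.verts.ncard = T.edgeSet.ncard + 1 := by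
  classical
  have : Fintype T.verts := Fintype.ofFinite _
  have : Fintype T.coe.edgeSet := Fintype.ofFinite _
  have hedges : T.coe.edgeSet.ncard = T.edgeSet.ncard := by
    rw [← T.image_coe_edgeSet_coe,
      Set.ncard_image_of_injective _ (Sym2.map.injective Subtype.val_injective)]
  rw [← Nat.card_coe_set_eq, Nat.card_eq_fintype_card, ← hT.card_edgeFinset, ← hedges,
    Set.ncard_eq_toFinset_card', edgeFinset]

namespace IsRainbowSTree

variable [Finite V] {c : Sym2 V → α} {S : Set V} {T : G.Subgraph}

lemma ncard_verts_le [Fintype α] (h : G.IsRainbowSTree c S T) :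
    T.verts.ncard ≤ Fintype.card α + 1 := by
  have hedges : T.edgeSet.ncard ≤ Fintype.card α := by
    simpa using Set.ncard_le_ncard_of_injOn c (fun e _ ↦ Set.mem_univ (c e)) h.2.2
  rw [Subgraph.ncard_verts_eq_ncard_edgeSet_add_one h.1]
  omega

lemma verts_eq [Fintype α] (h : G.IsRainbowSTree c S T) (hS : Fintype.card α + 1 ≤ S.ncard) :
    T.verts = S :=
  (Set.eq_of_subset_of_ncard_le h.2.1 (h.ncard_verts_le.trans hS) (Set.toFinite _)).symm

lemma exists_adj_color_ne (h : G.IsRainbowSTree c S T) (hS : 3 ≤ S.ncard) :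
    ∃ u v u' v', T.Adj u v ∧ T.Adj u' v' ∧ c s(u, v) ≠ c s(u', v') := by
  have hverts : S.ncard ≤ T.verts.ncard := Set.ncard_le_ncard h.2.1
  have hedges : 1 < T.edgeSet.ncard := by
    rw [Subgraph.ncard_verts_eq_ncard_edgeSet_add_one h.1] at hverts
    omega
  obtain ⟨⟨u, v⟩, ⟨u', v'⟩, he, he', hne⟩ := (Set.one_lt_ncard_iff).mp hedges
  exact ⟨u, v, u', v', he, he', fun hc ↦ hne (h.2.2 he he' hc)⟩

end IsRainbowSTree

lemma exists_isNClique_three_or_compl_of_two_lt_degree [Fintype V] [DecidableEq V]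
    (H : SimpleGraph V) [DecidableRel H.Adj] {v : V} (hv : 2 < H.degree v) :
    ∃ s : Finset V, H.IsNClique 3 s ∨ Hᶜ.IsNClique 3 s := by
  obtain ⟨a, b, c, ha, hb, hc, hab, hac, hbc⟩ := Finset.two_lt_card_iff.mp hv
  rw [mem_neighborFinset] at ha hb hc
  by_cases hab' : H.Adj a b
  · exact ⟨{v, a, b}, .inl (is3Clique_triple_iff.mpr ⟨ha, hb, hab'⟩)⟩
  by_cases hac' : H.Adj a c
  · exact ⟨{v, a, c}, .inl (is3Clique_triple_iff.mpr ⟨ha, hc, hac'⟩)⟩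
  by_cases hbc' : H.Adj b c
  · exact ⟨{v, b, c}, .inl (is3Clique_triple_iff.mpr ⟨hb, hc, hbc'⟩)⟩
  exact ⟨{a, b, c}, .inr (is3Clique_triple_iff.mpr ⟨⟨hab, hab'⟩, ⟨hac, hac'⟩, ⟨hbc, hbc'⟩⟩)⟩

lemma exists_isNClique_three_or_compl [Fintype V] [DecidableEq V] (H : SimpleGraph V)
    (hV : 6 ≤ Fintype.card V) : ∃ s : Finset V, H.IsNClique 3 s ∨ Hᶜ.IsNClique 3 s := by
  classical
  obtain ⟨v⟩ : Nonempty V := Fintype.card_pos_iff.mp (by omega)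
  by_cases hv : 2 < H.degree v
  · exact H.exists_isNClique_three_or_compl_of_two_lt_degree hv
  · have hv' : 2 < Hᶜ.degree v := by rw [degree_compl]; omega
    obtain ⟨s, hs⟩ := Hᶜ.exists_isNClique_three_or_compl_of_two_lt_degree hv'
    rw [compl_compl] at hs
    exact ⟨s, hs.symm⟩

section RainbowColoring

variable [DecidableEq V] {c : Sym2 V → α}

lemma IsRainbowColoring.exists_adj_color_ne_of_isNClique [Finite V] [Fintype α]
    (hc : G.IsRainbowColoring 3 c) (hα : Fintype.card α ≤ 2) {K : SimpleGraph V} {s : Finset V}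
    (hs : K.IsNClique 3 s) :
    ∃ u v u' v', (K ⊓ G).Adj u v ∧ (K ⊓ G).Adj u' v' ∧ c s(u, v) ≠ c s(u', v') := by
  have hS : (s : Set V).ncard = 3 := by rw [Set.ncard_coe_finset, hs.card_eq]
  obtain ⟨T, hT⟩ := hc s hs.card_eq
  have hverts := hT.verts_eq (by omega)
  have hKG {u v : V} (huv : T.Adj u v) : (K ⊓ G).Adj u v :=
    ⟨hs.isClique (hverts ▸ huv.fst_mem) (hverts ▸ huv.snd_mem) huv.ne, T.adj_sub huv⟩
  obtain ⟨u, v, u', v', huv, huv', hne⟩ := hT.exists_adj_color_ne hS.ge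
  exact ⟨u, v, u', v', hKG huv, hKG huv', hne⟩

lemma not_isRainbowColoring_three [Fintype V] [Fintype α] (hα : Fintype.card α ≤ 2)
    (hV : 6 ≤ Fintype.card V) : ¬ G.IsRainbowColoring 3 c := by
  intro hc
  obtain ⟨w⟩ : Nonempty V := Fintype.card_pos_iff.mp (by omega)
  let H := fromEdgeSet {e | e ∈ G.edgeSet ∧ c e = c s(w, w)}
  have hH {u v : V} (huv : G.Adj u v) : H.Adj u v ↔ c s(u, v) = c s(w, w) := by
    simp [H, huv, huv.ne]
  obtain ⟨s, hs | hs⟩ := H.exists_isNClique_three_or_compl hV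
  · obtain ⟨u, v, u', v', huv, huv', hne⟩ := hc.exists_adj_color_ne_of_isNClique hα hs
    exact hne (((hH huv.2).mp huv.1).trans ((hH huv'.2).mp huv'.1).symm)
  · obtain ⟨u, v, u', v', huv, huv', hne⟩ := hc.exists_adj_color_ne_of_isNClique hα hs
    have h₁ : c s(u, v) ≠ c s(w, w) := fun h ↦ huv.1.2 ((hH huv.2).mpr h)
    have h₂ : c s(u', v') ≠ c s(w, w) := fun h ↦ huv'.1.2 ((hH huv'.2).mpr h)
    exact absurd (Fintype.two_lt_card_iff.mpr ⟨_, _, _, hne, h₁, h₂⟩) (by omega)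

lemma not_isRainbowColoring_of_card_add_one_lt [Fintype V] [Fintype α] {k : ℕ}
    (hk : Fintype.card α + 1 < k) (hkV : k ≤ Fintype.card V) : ¬ G.IsRainbowColoring k c := by
  intro hc
  obtain ⟨S, -, hS⟩ := Finset.exists_subset_card_eq (s := Finset.univ) (by simpa using hkV)
  obtain ⟨T, hT⟩ := hc S hS
  have := (Set.ncard_le_ncard hT.2.1).trans hT.ncard_verts_le
  rw [Set.ncard_coe_finset] at this
  omega

lemma not_isRainbowColoring_of_card_le_two [Fintype V] [Fintype α] (hα : Fintype.card α ≤ 2)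
    (hV : 6 ≤ Fintype.card V) {k : ℕ} (hk : 3 ≤ k) (hkV : k ≤ Fintype.card V) :
    ¬ G.IsRainbowColoring k c := by
  obtain rfl | hk : k = 3 ∨ 3 < k := by omega
  · exact not_isRainbowColoring_three hα hV
  · exact not_isRainbowColoring_of_card_add_one_lt (by omega) hkV

end RainbowColoring

end SimpleGraph

theorem stmt_4 {V : Type u} [Fintype V] [DecidableEq V] (G : SimpleGraph V) (n k : ℕ)
    (hconn : G.Connected) (hn : Fintype.card V = n) (hn6 : 6 ≤ n)
    (hk3 : 3 ≤ k) (hkn : k ≤ n) :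
    3 ≤ G.rxk k := by
  have hinj := (Fintype.equivFin (Sym2 V)).injective
  refine le_csInf ⟨_, _, isRainbowColoring_of_injective hconn hinj k⟩ ?_
  rintro q ⟨c, hc⟩
  by_contra! hq
  subst hn
  exact not_isRainbowColoring_of_card_le_two (by simpa using Nat.le_of_lt_succ hq) hn6 hk3 hkn hc
end

section
/- For every integer r ≥ 3, the 3-rainbow index of the complete bipartite graph K_{r,r} equals 3. -/
open SimpleGraph

universe u

/-! Three vertices on one side of `K_{r,r}` are pairwise non-adjacent, so a tree containing them
has an edge at each of them, and these three edges are distinct: at least three colours are needed.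
Conversely, colour the edge between the left vertex `a` and the right vertex `x` by the outcome of
comparing `x` with `a`. In a bipartite graph every connected subgraph with at most three edges is a
tree, and every 3-set of vertices is covered by a star with three edges or a path with at most three
edges on which the three comparisons `<`, `=`, `>` do not repeat. -/

theorem Finset.exists_lt_of_card_eq_two {α : Type*} [LinearOrder α] {s : Finset α}
    (h : s.card = 2) : ∃ a b, a < b ∧ s = {a, b} := by
  obtain ⟨x, y, hxy, rfl⟩ := Finset.card_eq_two.1 h
  rcases hxy.lt_or_gt with hlt | hlt
  exacts [⟨x, y, hlt, rfl⟩, ⟨y, x, hlt, Finset.pair_comm _ _⟩]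

theorem Finset.exists_lt_lt_of_card_eq_three {α : Type*} [LinearOrder α] {s : Finset α}
    (h : s.card = 3) : ∃ a b c, a < b ∧ b < c ∧ s = {a, b, c} := by
  obtain ⟨x, y, z, hxy, hxz, hyz, rfl⟩ := Finset.card_eq_three.1 h
  rcases hxy.lt_or_gt with h1 | h1 <;> rcases hxz.lt_or_gt with h2 | h2 <;>
    rcases hyz.lt_or_gt with h3 | h3 <;> grind

namespace SimpleGraph

variable {V α : Type*} {G : SimpleGraph V} {c : Sym2 V → α} {S : Set V} {u m v w : V}

theorem Walk.IsTrail.length_le_encard_edgeSet {p : G.Walk u v} (hp : p.IsTrail) :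
    (p.length : ℕ∞) ≤ G.edgeSet.encard := by
  classical
  calc (p.length : ℕ∞) = (p.edges.toFinset : Set (Sym2 V)).encard := by
        rw [Set.encard_coe_eq_coe_finsetCard, List.toFinset_card_of_nodup hp.edges_nodup,
          length_edges]
    _ ≤ G.edgeSet.encard := Set.encard_le_encard fun e he =>
        p.edges_subset_edgeSet (List.mem_toFinset.mp he)

theorem Subgraph.isAcyclic_coe_of_encard_edgeSet_le_three (hG : G.Colorable 2)
    {T : G.Subgraph} (hT : T.edgeSet.encard ≤ 3) : T.coe.IsAcyclic := by
  intro v p hp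
  have heven : Even p.length := two_colorable_iff_forall_loop_even.mp (hG.of_hom T.hom) v p
  have hcoe : T.coe.edgeSet.encard = T.edgeSet.encard := by
    rw [← T.image_coe_edgeSet_coe, (Sym2.map.injective Subtype.val_injective).encard_image]
  have hlen : (p.length : ℕ∞) ≤ 3 := hp.isTrail.length_le_encard_edgeSet.trans (hcoe ▸ hT)
  have := hp.three_le_length
  norm_cast at hlen
  grind

theorem Walk.isRainbowSTree_toSubgraph (hG : G.Colorable 2) (hα : ENat.card α ≤ 3)
    (p : G.Walk u v) (hS : S ⊆ {w | w ∈ p.support})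
    (hc : Set.InjOn c p.edgeSet) : G.IsRainbowSTree c S p.toSubgraph := by
  rw [← p.edgeSet_toSubgraph] at hc
  have hcard : p.toSubgraph.edgeSet.encard ≤ 3 := by
    rw [← hc.encard_image]
    exact (Set.encard_le_encard (Set.subset_univ _)).trans (by simpa using hα)
  exact ⟨⟨p.toSubgraph_connected.coe,
    Subgraph.isAcyclic_coe_of_encard_edgeSet_le_three hG hcard⟩, p.verts_toSubgraph ▸ hS, hc⟩

theorem exists_isRainbowSTree_path2 (hG : G.Colorable 2) (hα : ENat.card α ≤ 3)
    (h₁ : G.Adj u m) (h₂ : G.Adj m v) (hc : c s(u, m) ≠ c s(m, v)) (hS : S ⊆ {u, m, v}) :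
    ∃ T, G.IsRainbowSTree c S T :=
  ⟨_, (Walk.cons h₁ (.cons h₂ .nil)).isRainbowSTree_toSubgraph hG hα
    (hS.trans (by simp [Set.insert_subset_iff]))
    (List.inj_on_of_nodup_map (f := c) (by simpa using hc))⟩

theorem exists_isRainbowSTree_path3 (hG : G.Colorable 2) (hα : ENat.card α ≤ 3)
    (h₁ : G.Adj u m) (h₂ : G.Adj m v) (h₃ : G.Adj v w)
    (hc : [c s(u, m), c s(m, v), c s(v, w)].Nodup) (hS : S ⊆ {u, m, v, w}) :
    ∃ T, G.IsRainbowSTree c S T :=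
  ⟨_, (Walk.cons h₁ (.cons h₂ (.cons h₃ .nil))).isRainbowSTree_toSubgraph hG hα
    (hS.trans (by simp [Set.insert_subset_iff])) (List.inj_on_of_nodup_map (f := c) hc)⟩

theorem exists_isRainbowSTree_star3 (hG : G.Colorable 2) (hα : ENat.card α ≤ 3)
    (h₁ : G.Adj m u) (h₂ : G.Adj m v) (h₃ : G.Adj m w)
    (hc : [c s(m, u), c s(m, v), c s(m, w)].Nodup) (hS : S ⊆ {m, u, v, w}) :
    ∃ T, G.IsRainbowSTree c S T := by
  -- the walk `u, m, v, m, w` traces the star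
  refine ⟨_, (Walk.cons h₁.symm (.cons h₂ (.cons h₂.symm (.cons h₃ .nil))))
    |>.isRainbowSTree_toSubgraph hG hα (hS.trans (by simp [Set.insert_subset_iff]))
    ((show Set.InjOn c {e | e ∈ [s(m, u), s(m, v), s(m, w)]} from
      List.inj_on_of_nodup_map hc).mono ?_)⟩
  intro e he
  simp only [Walk.mem_edgeSet, Walk.edges_cons, Walk.edges_nil, List.mem_cons, List.not_mem_nil,
    or_false, Sym2.eq_swap (a := u), Sym2.eq_swap (a := v)] at he ⊢
  tauto

theorem Subgraph.Connected.exists_mem_edgeSet {T : G.Subgraph} (hT : T.Connected)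
    (hv : v ∈ T.verts) (hw : w ∈ T.verts) (hvw : v ≠ w) : ∃ e ∈ T.edgeSet, v ∈ e := by
  have : Nontrivial T.verts := ⟨⟨v, hv⟩, ⟨w, hw⟩, by simpa using hvw⟩
  obtain ⟨u, hu⟩ := hT.preconnected.exists_adj_of_nontrivial ⟨v, hv⟩
  exact ⟨s(v, u), hu, Sym2.mem_mk_left _ _⟩

theorem IsRainbowColoring.le_of_isIndepSet [DecidableEq V] {k q : ℕ} {c : Sym2 V → Fin q}
    (hc : G.IsRainbowColoring k c) {s : Finset V} (hs : G.IsIndepSet s) (hcard : s.card = k)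
    (hk : 2 ≤ k) : k ≤ q := by
  obtain ⟨T, hT, hsT, hinj⟩ := hc s hcard
  have hincident : ∀ v ∈ s, ∃ e ∈ T.edgeSet, v ∈ e := fun v hv =>
    have ⟨w, hw, hwv⟩ := s.exists_mem_ne (by omega) v
    Subgraph.Connected.exists_mem_edgeSet ⟨hT.connected⟩ (hsT hv) (hsT hw) hwv.symm
  obtain ⟨v₀, -⟩ := s.card_pos.mp (by omega)
  have : Nonempty (Sym2 V) := ⟨s(v₀, v₀)⟩
  choose! e heT hve using hincident
  have he_inj : Set.InjOn e (s : Set V) := by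
    intro v hv w hw hvw
    by_contra hne
    have hadj : G.Adj v w := by
      rw [← mem_edgeSet, ← (Sym2.mem_and_mem_iff hne).mp ⟨hve v hv, hvw ▸ hve w hw⟩]
      exact T.edgeSet_subset (heT v hv)
    exact hs hv hw hne hadj
  suffices (k : ℕ∞) ≤ q by exact_mod_cast this
  calc (k : ℕ∞) = (s : Set V).encard := by rw [Set.encard_coe_eq_coe_finsetCard, hcard]
    _ ≤ T.edgeSet.encard := Set.encard_le_encard_of_injOn heT he_inj
    _ ≤ (Set.univ : Set (Fin q)).encard :=
        Set.encard_le_encard_of_injOn (Set.mapsTo_univ _ _) hinj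
    _ = q := by simp

theorem rxk_eq_of_isRainbowColoring [DecidableEq V] {k q : ℕ} {c : Sym2 V → Fin q}
    (hc : G.IsRainbowColoring k c)
    (hmin : ∀ q' (c' : Sym2 V → Fin q'), G.IsRainbowColoring k c' → q ≤ q') : G.rxk k = q :=
  le_antisymm (Nat.sInf_le ⟨c, hc⟩) (le_csInf ⟨q, c, hc⟩ fun _ ⟨c', hc'⟩ => hmin _ c' hc')

end SimpleGraph

namespace SimpleGraph.CompleteBipartiteGraph

open Sum

variable {β : Type*} {S : Set (β ⊕ β)}

local notation "𝐊" => completeBipartiteGraph β β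

theorem adj_inl_inr (a x : β) : (𝐊).Adj (inl a) (inr x) := by simp
theorem adj_inr_inl (x a : β) : (𝐊).Adj (inr x) (inl a) := by simp

theorem colorable_two : (𝐊).Colorable 2 := (bicoloring β β).colorable

theorem isIndepSet_of_subset_range_inl {s : Set (β ⊕ β)} (hs : s ⊆ Set.range inl) :
    (𝐊).IsIndepSet s := by
  rintro _ hv _ hw -
  obtain ⟨a, rfl⟩ := hs hv
  obtain ⟨b, rfl⟩ := hs hw
  simp

variable [LinearOrder β]

def compareColor (a x : β) : Fin 3 := if x < a then 0 else if x = a then 1 else 2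

theorem compareColor_of_lt {a x : β} (h : x < a) : compareColor a x = 0 := if_pos h
@[simp] theorem compareColor_self (a : β) : compareColor a a = 1 := by simp [compareColor]
theorem compareColor_of_gt {a x : β} (h : a < x) : compareColor a x = 2 := by
  simp [compareColor, h.not_gt, h.ne']

theorem compareColor_ne_of_le_of_le_left {a b x : β} (hab : a < b) (hax : a ≤ x)
    (hxb : x ≤ b) :
    compareColor a x ≠ compareColor b x := by
  unfold compareColor; split_ifs <;> first | decide | order

theorem compareColor_ne_of_le_of_le_right {a x y : β} (hxy : x < y) (hxa : x ≤ a)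
    (hay : a ≤ y) :
    compareColor a x ≠ compareColor a y := by
  unfold compareColor; split_ifs <;> first | decide | order

def orderColoring : Sym2 (β ⊕ β) → Fin 3 :=
  Sym2.lift ⟨fun
    | inl a, inr x => compareColor a x
    | inr x, inl a => compareColor a x
    | _, _ => 0, by rintro (a | a) (b | b) <;> rfl⟩

@[simp] theorem orderColoring_inl_inr (a x : β) :
    orderColoring s(inl a, inr x) = compareColor a x := rfl
@[simp] theorem orderColoring_inr_inl (x a : β) :
    orderColoring s(inr x, inl a) = compareColor a x := rfl

theorem exists_isRainbowSTree_inl_inl_inl {a b c : β} (hab : a < b) (hbc : b < c)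
    (hS : S ⊆ {inl a, inl b, inl c}) : ∃ T, (𝐊).IsRainbowSTree orderColoring S T :=
  exists_isRainbowSTree_star3 colorable_two (by simp)
    (adj_inr_inl b a) (adj_inr_inl b b) (adj_inr_inl b c)
    (by simp [compareColor_of_gt hab, compareColor_of_lt hbc]) (hS.trans (by simp))

theorem exists_isRainbowSTree_inr_inr_inr {x y z : β} (hxy : x < y) (hyz : y < z)
    (hS : S ⊆ {inr x, inr y, inr z}) : ∃ T, (𝐊).IsRainbowSTree orderColoring S T :=
  exists_isRainbowSTree_star3 colorable_two (by simp)
    (adj_inl_inr y x) (adj_inl_inr y y) (adj_inl_inr y z)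
    (by simp [compareColor_of_lt hxy, compareColor_of_gt hyz]) (hS.trans (by simp))

theorem exists_isRainbowSTree_inl_inl_inr {a b x : β} (hab : a < b)
    (hS : S ⊆ {inl a, inl b, inr x}) : ∃ T, (𝐊).IsRainbowSTree orderColoring S T := by
  rcases lt_or_ge x a with hxa | hax
  · exact exists_isRainbowSTree_path3 colorable_two (by simp)
      (adj_inr_inl x a) (adj_inl_inr a b) (adj_inr_inl b b)
      (by simp [compareColor_of_lt hxa, compareColor_of_gt hab])
      (hS.trans (by simp [Set.insert_subset_iff]))
  rcases le_or_gt x b with hxb | hbx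
  · exact exists_isRainbowSTree_path2 colorable_two (by simp)
      (adj_inl_inr a x) (adj_inr_inl x b)
      (by simpa using compareColor_ne_of_le_of_le_left hab hax hxb)
      (hS.trans (by simp [Set.insert_subset_iff]))
  · exact exists_isRainbowSTree_path3 colorable_two (by simp)
      (adj_inr_inl x a) (adj_inl_inr a a) (adj_inr_inl a b)
      (by simp [compareColor_of_gt (hab.trans hbx), compareColor_of_lt hab])
      (hS.trans (by simp [Set.insert_subset_iff]))

theorem exists_isRainbowSTree_inl_inr_inr {a x y : β} (hxy : x < y)
    (hS : S ⊆ {inl a, inr x, inr y}) : ∃ T, (𝐊).IsRainbowSTree orderColoring S T := by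
  rcases lt_or_ge a x with hax | hxa
  · exact exists_isRainbowSTree_path3 colorable_two (by simp)
      (adj_inl_inr a x) (adj_inr_inl x y) (adj_inl_inr y y)
      (by simp [compareColor_of_gt hax, compareColor_of_lt hxy])
      (hS.trans (by simp [Set.insert_subset_iff]))
  rcases le_or_gt a y with hay | hya
  · exact exists_isRainbowSTree_path2 colorable_two (by simp)
      (adj_inr_inl x a) (adj_inl_inr a y)
      (by simpa using compareColor_ne_of_le_of_le_right hxy hxa hay)
      (hS.trans (by simp [Set.insert_subset_iff]))
  · exact exists_isRainbowSTree_path3 colorable_two (by simp)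
      (adj_inl_inr a x) (adj_inr_inl x x) (adj_inl_inr x y)
      (by simp [compareColor_of_lt (hxy.trans hya), compareColor_of_gt hxy])
      (hS.trans (by simp [Set.insert_subset_iff]))

theorem exists_isRainbowSTree_disjSum {L R : Finset β} (h : L.card + R.card = 3) :
    ∃ T, (𝐊).IsRainbowSTree orderColoring ↑(L.disjSum R) T := by
  rcases (by omega : L.card = 3 ∧ R.card = 0 ∨ L.card = 2 ∧ R.card = 1 ∨
      L.card = 1 ∧ R.card = 2 ∨ L.card = 0 ∧ R.card = 3) with
    ⟨hL, hR⟩ | ⟨hL, hR⟩ | ⟨hL, hR⟩ | ⟨hL, hR⟩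
  · obtain ⟨a, b, c, hab, hbc, rfl⟩ := L.exists_lt_lt_of_card_eq_three hL
    obtain rfl := Finset.card_eq_zero.1 hR
    exact exists_isRainbowSTree_inl_inl_inl hab hbc (by intro v; cases v <;> simp)
  · obtain ⟨a, b, hab, rfl⟩ := L.exists_lt_of_card_eq_two hL
    obtain ⟨x, rfl⟩ := Finset.card_eq_one.1 hR
    exact exists_isRainbowSTree_inl_inl_inr (x := x) hab (by intro v; cases v <;> simp)
  · obtain ⟨a, rfl⟩ := Finset.card_eq_one.1 hL
    obtain ⟨x, y, hxy, rfl⟩ := R.exists_lt_of_card_eq_two hR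
    exact exists_isRainbowSTree_inl_inr_inr (a := a) hxy (by intro v; cases v <;> simp)
  · obtain rfl := Finset.card_eq_zero.1 hL
    obtain ⟨x, y, z, hxy, hyz, rfl⟩ := R.exists_lt_lt_of_card_eq_three hR
    exact exists_isRainbowSTree_inr_inr_inr hxy hyz (by intro v; cases v <;> simp)

theorem isRainbowColoring_orderColoring : (𝐊).IsRainbowColoring 3 orderColoring := by
  intro S hS
  rw [← S.toLeft_disjSum_toRight] at hS ⊢
  exact exists_isRainbowSTree_disjSum (by rwa [Finset.card_disjSum] at hS)

end SimpleGraph.CompleteBipartiteGraph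

open SimpleGraph.CompleteBipartiteGraph in
theorem stmt_11 (r : ℕ) (hr : 3 ≤ r) :
    (completeBipartiteGraph (Fin r) (Fin r)).rxk 3 = 3 := by
  refine rxk_eq_of_isRainbowColoring isRainbowColoring_orderColoring fun q c hc => ?_
  let s : Finset (Fin r ⊕ Fin r) := Finset.univ.map ((Fin.castLEEmb hr).trans .inl)
  exact hc.le_of_isIndepSet (s := s)
    (isIndepSet_of_subset_range_inl (by simp [s, Set.range_subset_iff])) (by simp [s])
    (by norm_num)
end

section
/- For integers r ≥ 2 and t ≥ 3, the 3-rainbow index of the complete t-partite graph with all parts of size r equals 3. -/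
open SimpleGraph

universe u

/-!
Upper bound: colour the edge between `⟨i, a⟩` and `⟨j, b⟩`, `i < j`, by `compare a b`. Three
vertices meeting at least two parts are joined by a rainbow path of length two unless its two
colours agree; such a coincidence pins down the relative order of the values, and then a tree with
three edges through one extra vertex is rainbow. Three vertices of one part are the leaves of a
rainbow star centred, in another part, at the median of their values.

Lower bound: with two colours a rainbow tree on a triple has two edges, so it is a path on the
triple itself. Hence for nonadjacent `u, v` the edges `uw` and `vw` get different colours, and the
colouring between two nonadjacent pairs is a Latin square over `Fin 2`, i.e. `c₀ + i + j`. Three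
such affine colourings between three nonadjacent pairs always agree on some triangle, and a
monochromatic triangle has no rainbow tree.
-/

lemma compare_eq_compare_iff_eq {α : Type*} [LinearOrder α] {a b : α} :
    compare a b = compare b a ↔ a = b := by
  rcases lt_trichotomy a b with h | rfl | h
  · simp [compare_lt_iff_lt.2 h, compare_gt_iff_gt.2 h, h.ne]
  · simp
  · simp [compare_lt_iff_lt.2 h, compare_gt_iff_gt.2 h, h.ne']

lemma exists_compare_pairwise_ne {α : Type*} [LinearOrder α] {a b d : α} (hab : a ≠ b)
    (had : a ≠ d) (hbd : b ≠ d) :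
    ∃ e, compare e a ≠ compare e b ∧ compare e a ≠ compare e d ∧ compare e b ≠ compare e d := by
  wlog h : a < b generalizing a b
  · obtain ⟨e, h₁, h₂, h₃⟩ := this hab.symm hbd had (hab.symm.lt_of_le (not_lt.1 h))
    exact ⟨e, h₁.symm, h₃, h₂⟩
  rcases had.lt_or_gt with had | hda
  · rcases hbd.lt_or_gt with hbd | hdb
    · exact ⟨b, by simp [compare_lt_iff_lt.2 hbd, compare_gt_iff_gt.2 h]⟩
    · exact ⟨d, by simp [compare_lt_iff_lt.2 hdb, compare_gt_iff_gt.2 had]⟩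
  · exact ⟨a, by simp [compare_lt_iff_lt.2 h, compare_gt_iff_gt.2 hda]⟩

lemma Fin.two_latin_eq_add {f : Fin 2 → Fin 2 → Fin 2} (hrow : ∀ j, f 0 j ≠ f 1 j)
    (hcol : ∀ i, f i 0 ≠ f i 1) : f = fun i j => f 0 0 + i + j := by
  have hsucc : ∀ a b : Fin 2, a ≠ b → b = a + 1 := by decide
  have h01 := hsucc _ _ (hcol 0)
  have h10 := hsucc _ _ (hrow 0)
  have h11 := hsucc _ _ (hcol 1)
  funext i j
  fin_cases i <;> fin_cases j
  · simp
  · simpa using h01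
  · simpa using h10
  · simp [h11, h10, add_assoc]

lemma Fin.exists_eq_of_two_latin {f g h : Fin 2 → Fin 2 → Fin 2}
    (hf₁ : ∀ j, f 0 j ≠ f 1 j) (hf₂ : ∀ i, f i 0 ≠ f i 1)
    (hg₁ : ∀ j, g 0 j ≠ g 1 j) (hg₂ : ∀ i, g i 0 ≠ g i 1)
    (hh₁ : ∀ j, h 0 j ≠ h 1 j) (hh₂ : ∀ i, h i 0 ≠ h i 1) :
    ∃ x y z, h x z = f x y ∧ g y z = f x y := by
  rw [Fin.two_latin_eq_add hf₁ hf₂, Fin.two_latin_eq_add hg₁ hg₂, Fin.two_latin_eq_add hh₁ hh₂]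
  generalize f 0 0 = a, g 0 0 = b, h 0 0 = c
  exact ⟨0, b + c, a + b, by revert a b c; decide⟩

namespace SimpleGraph

variable {V : Type*} {G : SimpleGraph V}

namespace Subgraph

lemma natCard_edgeSet_coe (T : G.Subgraph) : Nat.card T.coe.edgeSet = T.edgeSet.ncard := by
  rw [← T.image_coe_edgeSet_coe,
    Set.ncard_image_of_injective _ (Sym2.map.injective Subtype.val_injective),
    Nat.card_coe_set_eq]

lemma isTree_coe_iff [Finite V] {T : G.Subgraph} :
    T.coe.IsTree ↔ T.Connected ∧ T.edgeSet.ncard + 1 = T.verts.ncard := by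
  rw [isTree_iff_connected_and_card, natCard_edgeSet_coe, Nat.card_coe_set_eq,
    Subgraph.connected_iff']

lemma isTree_coe_sup_subgraphOfAdj [Finite V] {T : G.Subgraph} (hT : T.coe.IsTree) {v w : V}
    (h : G.Adj v w) (hv : v ∈ T.verts) (hw : w ∉ T.verts) :
    (T ⊔ G.subgraphOfAdj h).coe.IsTree := by
  obtain ⟨hconn, hcard⟩ := isTree_coe_iff.1 hT
  have hnew : s(v, w) ∉ T.edgeSet := fun hvw => hw (T.mem_edgeSet.1 hvw).snd_mem
  refine isTree_coe_iff.2 ⟨connected_sup hconn.preconnected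
    (subgraphOfAdj_connected h).preconnected ⟨v, hv, by simp⟩, ?_⟩
  rw [edgeSet_sup, edgeSet_subgraphOfAdj, Set.union_singleton, Set.ncard_insert_of_notMem hnew,
    verts_sup, subgraphOfAdj_verts, Set.union_insert, Set.union_singleton,
    Set.insert_eq_of_mem (Set.mem_insert_of_mem _ hv), Set.ncard_insert_of_notMem hw, hcard]

end Subgraph

section RainbowTrees

variable {α : Type*} {c : Sym2 V → α} {S : Set V} {T : G.Subgraph}

lemma IsRainbowSTree.mono {S' : Set V} (hT : G.IsRainbowSTree c S T) (h : S' ⊆ S) :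
    G.IsRainbowSTree c S' T :=
  ⟨hT.1, h.trans hT.2.1, hT.2.2⟩

lemma isRainbowSTree_subgraphOfAdj (c : Sym2 V → α) {u v : V} (h : G.Adj u v) :
    G.IsRainbowSTree c {u, v} (G.subgraphOfAdj h) :=
  ⟨IsTree.coe_subgraphOfAdj h, by simp, by simp [edgeSet_subgraphOfAdj]⟩

lemma IsRainbowSTree.sup_subgraphOfAdj [Finite V] (hT : G.IsRainbowSTree c S T) {v w : V}
    (h : G.Adj v w) (hv : v ∈ T.verts) (hw : w ∉ T.verts) (hc : c s(v, w) ∉ c '' T.edgeSet) :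
    G.IsRainbowSTree c (insert w S) (T ⊔ G.subgraphOfAdj h) := by
  refine ⟨Subgraph.isTree_coe_sup_subgraphOfAdj hT.1 h hv hw,
    Set.insert_subset (by simp) (hT.2.1.trans Set.subset_union_left), ?_⟩
  have hnew : s(v, w) ∉ T.edgeSet := fun hvw => hw (T.mem_edgeSet.1 hvw).snd_mem
  rw [Subgraph.edgeSet_sup, edgeSet_subgraphOfAdj, Set.union_singleton, Set.injOn_insert hnew]
  exact ⟨hT.2.2, hc⟩

lemma isRainbowSTree_cherry [Finite V] (c : Sym2 V → α) {x y z : V} (hyx : G.Adj y x)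
    (hyz : G.Adj y z) (hxz : x ≠ z) (hc : c s(y, x) ≠ c s(y, z)) :
    G.IsRainbowSTree c {x, y, z} (G.subgraphOfAdj hyx ⊔ G.subgraphOfAdj hyz) := by
  refine ((isRainbowSTree_subgraphOfAdj c hyx).sup_subgraphOfAdj hyz (by simp) ?_ ?_).mono ?_
  · simp [hxz.symm, hyz.ne.symm]
  · simpa [edgeSet_subgraphOfAdj] using hc.symm
  · simp [Set.insert_subset_iff]

lemma exists_isRainbowSTree_cherry_add_leaf [Finite V] (c : Sym2 V → α) {x y z p w : V}
    (hyx : G.Adj y x) (hyz : G.Adj y z) (hpw : G.Adj p w) (hxz : x ≠ z)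
    (hp : p ∈ ({x, y, z} : Set V)) (hw : w ∉ ({x, y, z} : Set V))
    (hc₁ : c s(y, x) ≠ c s(y, z)) (hc₂ : c s(y, x) ≠ c s(p, w)) (hc₃ : c s(y, z) ≠ c s(p, w)) :
    ∃ T : G.Subgraph, G.IsRainbowSTree c {x, y, z, w} T := by
  have hverts : (G.subgraphOfAdj hyx ⊔ G.subgraphOfAdj hyz).verts = {x, y, z} := by
    ext
    simp only [Subgraph.verts_sup, subgraphOfAdj_verts, Set.mem_union, Set.mem_insert_iff,
      Set.mem_singleton_iff]
    tauto
  refine ⟨_, ((isRainbowSTree_cherry c hyx hyz hxz hc₁).sup_subgraphOfAdj hpw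
    (hverts ▸ hp) (hverts ▸ hw) ?_).mono ?_⟩
  · simp [edgeSet_subgraphOfAdj, hc₂, hc₃]
  · simp [Set.insert_subset_iff]

lemma IsRainbowColoring.comp_injective [DecidableEq V] {β : Type*} {k : ℕ}
    (hc : G.IsRainbowColoring k c) {f : α → β} (hf : Function.Injective f) :
    G.IsRainbowColoring k (f ∘ c) := fun S hS =>
  (hc S hS).imp fun _ hT => ⟨hT.1, hT.2.1, hf.comp_injOn hT.2.2⟩

end RainbowTrees

section TwoColors

variable [Finite V] [DecidableEq V] {c : Sym2 V → Fin 2}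

lemma IsRainbowColoring.exists_edgeSet_subset_triangle (hc : G.IsRainbowColoring 3 c) {u v w : V}
    (huv : u ≠ v) (huw : u ≠ w) (hvw : v ≠ w) :
    ∃ T : G.Subgraph, T.edgeSet ⊆ {s(u, v), s(u, w), s(v, w)} ∧ T.edgeSet.ncard = 2 ∧
      Set.InjOn c T.edgeSet := by
  obtain ⟨T, htree, hS, hinj⟩ :=
    hc {u, v, w} (Finset.card_eq_three.2 ⟨u, v, w, huv, huw, hvw, rfl⟩)
  simp only [Finset.coe_insert, Finset.coe_singleton] at hS
  have hedges : T.edgeSet.ncard ≤ 2 := by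
    simpa [hinj.ncard_image] using Set.ncard_le_card (c '' T.edgeSet)
  have hverts : T.verts.ncard = T.edgeSet.ncard + 1 := (Subgraph.isTree_coe_iff.1 htree).2.symm
  have htriple : ({u, v, w} : Set V).ncard = 3 := Set.ncard_eq_three.2 ⟨u, v, w, huv, huw, hvw, rfl⟩
  have hspan : T.verts = {u, v, w} :=
    (Set.eq_of_subset_of_ncard_le hS (by rw [htriple]; omega)).symm
  refine ⟨T, fun e he => ?_, by rw [hspan, htriple] at hverts; omega, hinj⟩
  induction e using Sym2.ind with
  | h a b =>
    have hab : T.Adj a b := he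
    have ha : a ∈ T.verts := hab.fst_mem
    have hb : b ∈ T.verts := hab.snd_mem
    have hne : a ≠ b := hab.adj_sub.ne
    rw [hspan] at ha hb
    rcases ha with rfl | rfl | rfl <;> rcases hb with rfl | rfl | rfl <;>
      simp_all [Sym2.eq_swap]

lemma IsRainbowColoring.ne_of_not_adj (hc : G.IsRainbowColoring 3 c) {u v w : V}
    (huv : u ≠ v) (huw : u ≠ w) (hvw : v ≠ w) (hadj : ¬G.Adj u v) :
    c s(u, w) ≠ c s(v, w) := by
  obtain ⟨T, hsub, hcard, hinj⟩ := hc.exists_edgeSet_subset_triangle huv huw hvw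
  have huv' : s(u, v) ∉ T.edgeSet := fun h => hadj (T.adj_sub h)
  have hne : s(u, w) ≠ s(v, w) := by simp [huv, huw]
  have hT : T.edgeSet = {s(u, w), s(v, w)} :=
    Set.eq_of_subset_of_ncard_le
      (fun e he => by rcases hsub he with rfl | h; exacts [absurd he huv', h])
      (by rw [hcard, Set.ncard_pair hne])
  exact hinj.ne (by simp [hT]) (by simp [hT]) hne

lemma IsRainbowColoring.not_monochromatic (hc : G.IsRainbowColoring 3 c) {u v w : V}
    (huv : u ≠ v) (huw : u ≠ w) (hvw : v ≠ w) :
    ¬(c s(u, w) = c s(u, v) ∧ c s(v, w) = c s(u, v)) := by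
  rintro ⟨h₁, h₂⟩
  obtain ⟨T, hsub, hcard, hinj⟩ := hc.exists_edgeSet_subset_triangle huv huw hvw
  obtain ⟨e, f, hef, hT⟩ := Set.ncard_eq_two.1 hcard
  have hconst : ∀ g ∈ T.edgeSet, c g = c s(u, v) := fun g hg => by
    rcases hsub hg with rfl | rfl | rfl; exacts [rfl, h₁, h₂]
  have he : e ∈ T.edgeSet := by simp [hT]
  have hf : f ∈ T.edgeSet := by simp [hT]
  exact hef (hinj he hf ((hconst e he).trans (hconst f hf).symm))

theorem not_isRainbowColoring_three_fin_two (v : Fin 3 × Fin 2 ↪ V)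
    (hv : ∀ p, ¬G.Adj (v (p, 0)) (v (p, 1))) (c : Sym2 V → Fin 2) :
    ¬G.IsRainbowColoring 3 c := by
  intro hc
  have hne : ∀ {p q : Fin 3} (i j : Fin 2), p ≠ q → v (p, i) ≠ v (q, j) := fun i j hpq =>
    v.injective.ne (by simp [hpq])
  have hpair : ∀ p : Fin 3, v (p, 0) ≠ v (p, 1) := fun p => v.injective.ne (by simp)
  have latin : ∀ {p q : Fin 3}, p ≠ q →
      (∀ j, c s(v (p, 0), v (q, j)) ≠ c s(v (p, 1), v (q, j))) ∧
      ∀ i, c s(v (p, i), v (q, 0)) ≠ c s(v (p, i), v (q, 1)) := fun {p q} hpq =>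
    ⟨fun j => hc.ne_of_not_adj (hpair p) (hne _ _ hpq) (hne _ _ hpq) (hv p), fun i => by
      simpa only [Sym2.eq_swap (a := v (p, i))] using
        hc.ne_of_not_adj (hpair q) (hne 0 i hpq.symm) (hne 1 i hpq.symm) (hv q)⟩
  obtain ⟨x, y, z, hxz, hyz⟩ := Fin.exists_eq_of_two_latin
    (f := fun i j => c s(v (0, i), v (1, j))) (g := fun i j => c s(v (1, i), v (2, j)))
    (h := fun i j => c s(v (0, i), v (2, j)))
    (latin (by decide)).1 (latin (by decide)).2 (latin (by decide)).1 (latin (by decide)).2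
    (latin (by decide)).1 (latin (by decide)).2
  exact hc.not_monochromatic (hne _ _ (by decide)) (hne _ _ (by decide)) (hne _ _ (by decide))
    ⟨hxz, hyz⟩

end TwoColors

section orderColoring

variable {ι α : Type*} [LinearOrder ι] [LinearOrder α]

-- Pairs inside one part are not edges of the multipartite graph; they get the dummy colour `.eq`.
def orderColoring : Sym2 (Σ _ : ι, α) → Ordering :=
  Sym2.lift ⟨fun x y => if x.1 < y.1 then compare x.2 y.2 else if y.1 < x.1 then compare y.2 x.2
    else .eq, fun x y => by
      rcases lt_trichotomy x.1 y.1 with h | h | h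
      · simp [h, h.not_gt]
      · simp [h]
      · simp [h, h.not_gt]⟩

lemma orderColoring_of_lt {i j : ι} (h : i < j) (a b : α) :
    orderColoring s(⟨i, a⟩, ⟨j, b⟩) = compare a b := by
  simp [orderColoring, h]

lemma orderColoring_of_gt {i j : ι} (h : j < i) (a b : α) :
    orderColoring s(⟨i, a⟩, ⟨j, b⟩) = compare b a := by
  rw [Sym2.eq_swap, orderColoring_of_lt h]

lemma orderColoring_eq_iff {i j : ι} (hij : i ≠ j) {a b a' b' : α} :
    orderColoring s(⟨i, a⟩, ⟨j, b⟩) = orderColoring s(⟨i, a'⟩, ⟨j, b'⟩) ↔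
      compare a b = compare a' b' := by
  rcases hij.lt_or_gt with h | h
  · rw [orderColoring_of_lt h, orderColoring_of_lt h]
  · rw [orderColoring_of_gt h, orderColoring_of_gt h, Std.OrientedCmp.eq_swap (cmp := compare),
      Std.OrientedCmp.eq_swap (cmp := compare) (a := b'), Ordering.swap_inj]

local notation "𝒦" => completeMultipartiteGraph fun _ : ι => α

variable [Finite ι] [Finite α]

lemma exists_isRainbowSTree_orderColoring_one_part [Nontrivial ι] (i : ι) {a b d : α}
    (hab : a ≠ b) (had : a ≠ d) (hbd : b ≠ d) :
    ∃ T : Subgraph 𝒦, IsRainbowSTree 𝒦 orderColoring {⟨i, a⟩, ⟨i, b⟩, ⟨i, d⟩} T := by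
  obtain ⟨k, hki⟩ := exists_ne i
  obtain ⟨e, h₁, h₂, h₃⟩ := exists_compare_pairwise_ne hab had hbd
  obtain ⟨T, hT⟩ := exists_isRainbowSTree_cherry_add_leaf (G := 𝒦) orderColoring
    (x := ⟨i, a⟩) (y := ⟨k, e⟩) (z := ⟨i, b⟩) (p := ⟨k, e⟩) (w := ⟨i, d⟩)
    (by simpa using hki) (by simpa using hki) (by simpa using hki) (by simpa using hab)
    (by simp) (by simp [hki.symm, had.symm, hbd.symm])
    ((orderColoring_eq_iff hki).not.2 h₁) ((orderColoring_eq_iff hki).not.2 h₂)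
    ((orderColoring_eq_iff hki).not.2 h₃)
  exact ⟨T, hT.mono (by simp [Set.insert_subset_iff])⟩

lemma exists_isRainbowSTree_orderColoring_two_parts {i j : ι} (hij : i ≠ j) {a b : α}
    (hab : a ≠ b) (d : α) :
    ∃ T : Subgraph 𝒦, IsRainbowSTree 𝒦 orderColoring {⟨i, a⟩, ⟨i, b⟩, ⟨j, d⟩} T := by
  by_cases hd : compare d a = compare d b
  swap
  · exact ⟨_, (isRainbowSTree_cherry (G := 𝒦) orderColoring (y := ⟨j, d⟩)
      (by simpa using hij.symm) (by simpa using hij.symm) (by simpa using hab)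
      ((orderColoring_eq_iff hij.symm).not.2 hd)).mono (by simp [Set.insert_subset_iff])⟩
  have hda : d ≠ a := fun h =>
    hab (compare_eq_iff_eq.1 (by rw [h, Std.compare_self] at hd; exact hd.symm))
  have hdb : d ≠ b := fun h =>
    hab (compare_eq_iff_eq.1 (by rw [h, Std.compare_self] at hd; exact hd)).symm
  -- the cherry will be centred at `⟨j, a⟩`, so `b` must separate `a` from `d`
  wlog hb : compare a b ≠ compare d b generalizing a b
  · have hb' : compare b a ≠ compare d a := fun h =>
      hab (compare_eq_compare_iff_eq.1 ((not_not.1 hb).trans (hd.symm.trans h.symm)))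
    exact (this hab.symm hd.symm hdb hda hb').imp fun _ hT =>
      hT.mono (by simp [Set.insert_subset_iff])
  have hji := hij.symm
  refine (exists_isRainbowSTree_cherry_add_leaf (G := 𝒦) orderColoring
    (x := ⟨i, a⟩) (y := ⟨j, a⟩) (z := ⟨i, b⟩) (p := ⟨i, b⟩) (w := ⟨j, d⟩)
    (by simpa using hji) (by simpa using hji) (by simpa using hij) (by simpa using hab)
    (by simp) (by simp [hji, hda, hdb]) ?_ ?_ ?_).imp fun _ hT =>
      hT.mono (by simp [Set.insert_subset_iff])
  · rw [Ne, orderColoring_eq_iff hji]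
    simp [eq_comm (a := Ordering.eq), hab]
  · rw [Sym2.eq_swap (a := (⟨i, b⟩ : Σ _ : ι, α)), Ne, orderColoring_eq_iff hji]
    simp [eq_comm (a := Ordering.eq), hdb]
  · rw [Sym2.eq_swap (a := (⟨i, b⟩ : Σ _ : ι, α)), Ne, orderColoring_eq_iff hji]
    exact hb

lemma exists_isRainbowSTree_orderColoring_three_parts [Nontrivial α] {i j k : ι} (hij : i < j)
    (hjk : j < k) (a b d : α) :
    ∃ T : Subgraph 𝒦, IsRainbowSTree 𝒦 orderColoring {⟨i, a⟩, ⟨j, b⟩, ⟨k, d⟩} T := by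
  have hik := hij.trans hjk
  by_cases h₁ : compare a b = compare b d
  swap
  · exact ⟨_, isRainbowSTree_cherry (G := 𝒦) orderColoring (x := ⟨i, a⟩) (y := ⟨j, b⟩)
      (z := ⟨k, d⟩) (by simp [hij.ne']) (by simp [hjk.ne]) (by simp [hik.ne])
      (by rwa [orderColoring_of_gt hij, orderColoring_of_lt hjk])⟩
  by_cases h₂ : compare a b = compare a d
  swap
  · exact ⟨_, (isRainbowSTree_cherry (G := 𝒦) orderColoring (x := ⟨j, b⟩) (y := ⟨i, a⟩)
      (z := ⟨k, d⟩) (by simp [hij.ne]) (by simp [hik.ne]) (by simp [hjk.ne])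
      (by rwa [orderColoring_of_lt hij, orderColoring_of_lt hik])).mono
      (by simp [Set.insert_subset_iff])⟩
  by_cases hab : a = b
  · subst hab
    obtain rfl : a = d := by simpa using h₂.symm
    obtain ⟨m, hm⟩ := exists_ne a
    obtain ⟨T, hT⟩ := exists_isRainbowSTree_cherry_add_leaf (G := 𝒦) orderColoring
      (x := ⟨i, a⟩) (y := ⟨j, m⟩) (z := ⟨k, a⟩) (p := ⟨k, a⟩) (w := ⟨j, a⟩)
      (by simp [hij.ne']) (by simp [hjk.ne]) (by simp [hjk.ne']) (by simp [hik.ne])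
      (by simp) (by simp [hij.ne', hjk.ne, hm.symm])
      (by rw [orderColoring_of_gt hij, orderColoring_of_lt hjk]
          simp [compare_eq_compare_iff_eq, hm.symm])
      (by rw [orderColoring_of_gt hij, orderColoring_of_gt hjk]; simp [hm.symm])
      (by rw [orderColoring_of_lt hjk, orderColoring_of_gt hjk]; simp [hm])
    exact ⟨T, hT.mono (by simp [Set.insert_subset_iff])⟩
  · have hda : d ≠ a := fun h => hab (by rw [h] at h₂; simpa using h₂)
    obtain ⟨T, hT⟩ := exists_isRainbowSTree_cherry_add_leaf (G := 𝒦) orderColoring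
      (x := ⟨i, a⟩) (y := ⟨k, a⟩) (z := ⟨j, b⟩) (p := ⟨j, b⟩) (w := ⟨k, d⟩)
      (by simp [hik.ne']) (by simp [hjk.ne']) (by simp [hjk.ne]) (by simp [hij.ne])
      (by simp) (by simp [hik.ne', hjk.ne', hda])
      (by rw [orderColoring_of_gt hik, orderColoring_of_gt hjk]
          simp [eq_comm (a := Ordering.eq), Ne.symm hab])
      (by rw [orderColoring_of_gt hik, orderColoring_of_lt hjk, ← h₁]
          simp [eq_comm (a := Ordering.eq), hab])
      (by rw [orderColoring_of_gt hjk, orderColoring_of_lt hjk, ← h₁]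
          exact fun h => hab (compare_eq_compare_iff_eq.1 h.symm))
    exact ⟨T, hT.mono (by simp [Set.insert_subset_iff])⟩

lemma exists_isRainbowSTree_orderColoring [Nontrivial ι] [Nontrivial α] {x y z : Σ _ : ι, α}
    (hxy : x ≠ y) (hxz : x ≠ z) (hyz : y ≠ z) :
    ∃ T : Subgraph 𝒦, IsRainbowSTree 𝒦 orderColoring {x, y, z} T := by
  wlog hxy₁ : x.1 ≤ y.1 generalizing x y z
  · exact (this hxy.symm hyz hxz (le_of_not_ge hxy₁)).imp fun _ hT =>
      hT.mono (by simp [Set.insert_subset_iff])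
  wlog hyz₁ : y.1 ≤ z.1 generalizing x y z
  · rcases le_total x.1 z.1 with hxz₁ | hzx₁
    · exact (this hxz hxy hyz.symm hxz₁ (le_of_not_ge hyz₁)).imp fun _ hT =>
        hT.mono (by simp [Set.insert_subset_iff])
    · exact (this hxz.symm hyz.symm hxy hzx₁ hxy₁).imp fun _ hT =>
        hT.mono (by simp [Set.insert_subset_iff])
  obtain ⟨i, a⟩ := x
  obtain ⟨j, b⟩ := y
  obtain ⟨k, d⟩ := z
  rcases hxy₁.lt_or_eq with hij | rfl <;> rcases hyz₁.lt_or_eq with hjk | rfl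
  · exact exists_isRainbowSTree_orderColoring_three_parts hij hjk a b d
  · exact (exists_isRainbowSTree_orderColoring_two_parts hij.ne' (by simpa using hyz) a).imp
      fun _ hT => hT.mono (by simp [Set.insert_subset_iff])
  · exact exists_isRainbowSTree_orderColoring_two_parts hjk.ne (by simpa using hxy) d
  · exact exists_isRainbowSTree_orderColoring_one_part i (by simpa using hxy) (by simpa using hxz)
      (by simpa using hyz)

theorem isRainbowColoring_orderColoring [Nontrivial ι] [Nontrivial α]
    [DecidableEq (Σ _ : ι, α)] : IsRainbowColoring 𝒦 3 orderColoring := fun S hS => by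
  obtain ⟨x, y, z, hxy, hxz, hyz, rfl⟩ := Finset.card_eq_three.1 hS
  simpa using exists_isRainbowSTree_orderColoring hxy hxz hyz

end orderColoring

end SimpleGraph

theorem stmt_12 (r t : ℕ) (hr : 2 ≤ r) (ht : 3 ≤ t) :
    (completeMultipartiteGraph (fun _ : Fin t => Fin r)).rxk 3 = 3 := by
  have : Nontrivial (Fin r) := Fin.nontrivial_iff_two_le.2 hr
  have : Nontrivial (Fin t) := Fin.nontrivial_iff_two_le.2 (by omega)
  have hmem : 3 ∈ {q | ∃ c : Sym2 (Σ _ : Fin t, Fin r) → Fin q,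
      (completeMultipartiteGraph fun _ : Fin t => Fin r).IsRainbowColoring 3 c} :=
    ⟨_, (isRainbowColoring_orderColoring (ι := Fin t) (α := Fin r)).comp_injective
      (Fintype.equivFinOfCardEq rfl).injective⟩
  refine le_antisymm (Nat.sInf_le hmem) (le_csInf ⟨3, hmem⟩ ?_)
  rintro q ⟨c, hc⟩
  by_contra! hq
  let v : Fin 3 × Fin 2 ↪ Σ _ : Fin t, Fin r := (Equiv.sigmaEquivProd _ _).symm.toEmbedding.trans
    (.sigmaMap (Fin.castLEEmb ht) fun _ => Fin.castLEEmb hr)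
  exact not_isRainbowColoring_three_fin_two v (fun _ => by simp [v, Sigma.map])
    _ (hc.comp_injective (Fin.castLE_injective (by omega)))
end
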